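/- Let e ≥ 2 be an integer and let u ∈ ℂ⟦X⟧ have nonzero constant coefficient. Set z = X^e · u and let z′ be its formal derivative. Then there exists g ∈ ℂ⟦X⟧ such that z²·(z − 1)³·g = (z′)⁴, and the order of g equals 2e − 4. -/

import Mathlib

open PowerSeries

/-!
Write `e = n + 2`. Then `z′ = X^(n+1) v` with `v = e u + X u′`, and `v(0) = e u(0) ≠ 0`;
also `z - 1` is a unit because `z(0) = 0`. So `g = X^(2n) · v⁴ / (u² (z - 1)³)` solves
`z² (z - 1)³ g = (z′)⁴`, and its second factor is a unit, whence `ord g = 2n = 2e - 4`.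
-/

namespace PowerSeries

theorem derivative_X_pow_succ_mul {R : Type*} [CommSemiring R] (n : ℕ) (u : R⟦X⟧) :
    d⁄dX R (X ^ (n + 1) * u) = X ^ n * (C ((n : R) + 1) * u + X * d⁄dX R u) := by
  rw [Derivation.leibniz, derivative_pow, derivative_X, Nat.add_sub_cancel, smul_eq_mul,
    smul_eq_mul, map_add, map_natCast, map_one]
  push_cast
  ring

theorem order_X_pow_mul_of_constantCoeff_ne_zero {R : Type*} [Semiring R] (n : ℕ) {f : R⟦X⟧}
    (hf : constantCoeff f ≠ 0) : (X ^ n * f).order = (n : ℕ∞) := by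
  refine order_eq_nat.mpr ⟨?_, fun i hi => ?_⟩
  · simpa [coeff_X_pow_mul'] using hf
  · simp [coeff_X_pow_mul', Nat.not_le.mpr hi]

end PowerSeries

/-- For `z = X^e · u` with `u(0) ≠ 0` and `e ≥ 2`, the series `g` with
`z²(z-1)³g = (z′)⁴` exists and has order exactly `2e - 4`: the pullback of the
4-tensor `(dz/z) ⊗ (dz/(z-1))^⊗2 ⊗ (dz/(z(z-1)))` over `z = 0` is regular and nonzero. -/
theorem pullback_four_tensor_order_at_zero (e : ℕ) (he : 2 ≤ e) (u : PowerSeries ℂ)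
    (hu : PowerSeries.constantCoeff u ≠ 0) :
    ∃ g : PowerSeries ℂ,
      (PowerSeries.X ^ e * u) ^ 2 * ((PowerSeries.X ^ e * u) - 1) ^ 3 * g =
        (PowerSeries.derivative ℂ (PowerSeries.X ^ e * u)) ^ 4 ∧
      g.order = (2 * e - 4 : ℕ) := by
  obtain ⟨n, rfl⟩ : ∃ n, e = n + 1 + 1 := ⟨e - 2, by omega⟩
  set v : ℂ⟦X⟧ := C (((n + 1 : ℕ) : ℂ) + 1) * u + X * d⁄dX ℂ u
  set D : ℂ⟦X⟧ := u ^ 2 * (X ^ (n + 1 + 1) * u - 1) ^ 3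
  have hD : constantCoeff D ≠ 0 := by simp [D, hu]
  have hv : constantCoeff v ≠ 0 := by
    simpa [v, hu] using Nat.cast_add_one_ne_zero (R := ℂ) (n + 1)
  refine ⟨X ^ (2 * n) * (v ^ 4 * D⁻¹), ?_, ?_⟩
  · rw [derivative_X_pow_succ_mul]
    calc _ = (X ^ (n + 1) * v) ^ 4 * (D * D⁻¹) := by ring
      _ = _ := by rw [PowerSeries.mul_inv_cancel D hD, mul_one]
  · rw [show 2 * (n + 1 + 1) - 4 = 2 * n by omega]
    exact order_X_pow_mul_of_constantCoeff_ne_zero _ (by simp [constantCoeff_inv, hv, hD])
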